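/- Let A ∈ ℝ_max^{n×n}. Then ρ(A) is the greatest tropical eigenvalue of A: (i) there exists x ∈ ℝ_max^n with at least one finite component such that A ⊗ x = ρ(A) ⊗ x (i.e., max_j (a_{ij} + x_j) = ρ(A) + x_i for all i); (ii) if λ ∈ ℝ ∪ {−∞} and x ∈ ℝ_max^n has at least one finite component and satisfies A ⊗ x = λ ⊗ x, then λ ≤ ρ(A). -/

import Mathlib

/-- Max-plus identity matrix: `0` on the diagonal, `−∞` off it. -/
noncomputable def mpId (n : ℕ) : Fin n → Fin n → EReal := fun i j => if i = j then 0 else ⊥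

/-- Max-plus matrix product. -/
noncomputable def mpMul {n : ℕ} (A B : Fin n → Fin n → EReal) : Fin n → Fin n → EReal :=
  fun i j => ⨆ k, A i k + B k j

/-- Max-plus matrix powers, `A^0 = I`. -/
noncomputable def mpPow {n : ℕ} (A : Fin n → Fin n → EReal) : ℕ → Fin n → Fin n → EReal
  | 0 => mpId n
  | k + 1 => mpMul (mpPow A k) A

/-- Kleene star truncation `A* = I ⊕ A ⊕ ⋯ ⊕ A^{n−1}` (entrywise maximum). -/
noncomputable def mpStar {n : ℕ} (A : Fin n → Fin n → EReal) : Fin n → Fin n → EReal :=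
  fun i j => ⨆ k : Fin n, mpPow A (k : ℕ) i j

/-- Maximum cycle mean `ρ(A)`: the supremum, over all closed walks
`f 0, f 1, …, f k = f 0` (`k ≥ 1`), of the mean weight of the walk.  A walk using
a `−∞` arc has mean `−∞`, so this equals the maximum mean over elementary cycles
of the digraph of finite entries, and it is `−∞` when that digraph is acyclic. -/
noncomputable def rho {n : ℕ} (A : Fin n → Fin n → EReal) : EReal :=
  ⨆ (k : ℕ) (_ : 0 < k) (f : ℕ → Fin n) (_ : f k = f 0),
    (((k : ℝ)⁻¹ : ℝ) : EReal) * ∑ i ∈ Finset.range k, A (f i) (f (i + 1))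

/-!
Splitting a closed walk at a repeated vertex writes it as two shorter closed walks, so
`ρ(A) ≤ r` iff no closed walk of length `≤ n` of `A - r` has positive weight. Hence `ρ(A)` is
the largest mean of the finitely many short closed walks, and it is attained.

If `ρ(A) = ⊥`, walking backwards along finite arcs never closes up, so some column of `A` is
`⊥` and the corresponding unit vector is an eigenvector. If `ρ(A) = r` is finite, `B = A - r`
has no positive cycles (so the Kleene star `B*` is finite) and a cycle of weight `0` through
some vertex `v`; the column of `v` in `B*` is then an eigenvector of `B` for `0`.

Conversely, following arcs that attain the maxima in `A ⊗ x = λ ⊗ x` from a finite component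
of `x` closes up to a cycle of some length `k` whose weight telescopes to `k λ`, so `λ ≤ ρ(A)`.
-/

open Finset

section Walks

variable {ι M : Type*}

noncomputable def walkWeight [AddCommMonoid M] (B : ι → ι → M) (f : ℕ → ι) (k : ℕ) : M :=
  ∑ t ∈ range k, B (f t) (f (t + 1))

section AddCommMonoid

variable [AddCommMonoid M] (B : ι → ι → M)

theorem walkWeight_zero (f : ℕ → ι) : walkWeight B f 0 = 0 := sum_range_zero _

theorem walkWeight_add (f : ℕ → ι) (k m : ℕ) :
    walkWeight B f (k + m) = walkWeight B f k + walkWeight B (fun t => f (k + t)) m := by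
  simp only [walkWeight, sum_range_add, add_assoc]

theorem walkWeight_succ' (f : ℕ → ι) (k : ℕ) :
    walkWeight B f (k + 1) = B (f 0) (f 1) + walkWeight B (fun t => f (t + 1)) k := by
  rw [walkWeight, sum_range_succ', add_comm]
  rfl

theorem walkWeight_congr {f g : ℕ → ι} {k : ℕ} (h : ∀ t ≤ k, f t = g t) :
    walkWeight B f k = walkWeight B g k :=
  sum_congr rfl fun t ht => by
    rw [mem_range] at ht
    rw [h t ht.le, h (t + 1) ht]

theorem walkWeight_add_const (c : M) (f : ℕ → ι) (k : ℕ) :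
    walkWeight (fun i j => B i j + c) f k = walkWeight B f k + k • c := by
  rw [walkWeight, sum_add_distrib, sum_const, card_range, walkWeight]

-- The walk in the middle is `f` with its closed subwalk `f a, …, f (a + d)` cut out.
theorem walkWeight_eq_add_of_eq {f : ℕ → ι} {a d : ℕ} (hf : f (a + d) = f a) (m : ℕ) :
    walkWeight B f (a + d + m) =
      walkWeight B (fun t => if t < a then f t else f (t + d)) (a + m) +
        walkWeight B (fun t => f (a + t)) d := by
  set g : ℕ → ι := fun t => if t < a then f t else f (t + d)
  have hga : walkWeight B g a = walkWeight B f a := walkWeight_congr B fun t ht => by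
    rcases ht.lt_or_eq with ht | rfl
    · exact if_pos ht
    · exact (if_neg (lt_irrefl t)).trans hf
  have hgm : (fun t => g (a + t)) = fun t => f (a + d + t) := funext fun t => by
    simp only [g, if_neg (Nat.not_lt.2 (Nat.le_add_right a t))]
    congr 1
    omega
  rw [walkWeight_add, walkWeight_add, walkWeight_add B g, hga, hgm]
  abel

theorem walkWeight_add_eq_nsmul_add {x : ι → M} {c : M} {f : ℕ → ι}
    (h : ∀ t, B (f t) (f (t + 1)) + x (f (t + 1)) = c + x (f t)) (k : ℕ) :
    walkWeight B f k + x (f k) = k • c + x (f 0) := by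
  induction k with
  | zero => simp [walkWeight_zero]
  | succ k ih =>
    rw [walkWeight, sum_range_succ, ← walkWeight, add_assoc, h, add_left_comm, ih, succ_nsmul]
    abel

end AddCommMonoid

theorem exists_lt_le_card_eq [Fintype ι] (f : ℕ → ι) :
    ∃ a b, a < b ∧ b ≤ Fintype.card ι ∧ f a = f b := by
  obtain ⟨a, b, hab, he⟩ := Fintype.exists_ne_map_eq_of_card_lt
    (fun t : Fin (Fintype.card ι + 1) => f t) (by simp)
  rcases lt_or_gt_of_ne (Fin.val_ne_of_ne hab) with h | h
  · exact ⟨a, b, h, Nat.lt_succ_iff.1 b.2, he⟩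
  · exact ⟨b, a, h, Nat.lt_succ_iff.1 a.2, he.symm⟩

theorem exists_walkWeight_eq_add_closed [Fintype ι] [AddCommMonoid M] (B : ι → ι → M)
    (f : ℕ → ι) {k : ℕ} (hk : Fintype.card ι < k) :
    ∃ d, 0 < d ∧ d ≤ Fintype.card ι ∧ ∃ g c : ℕ → ι, g 0 = f 0 ∧ g (k - d) = f k ∧
      c d = c 0 ∧ walkWeight B f k = walkWeight B g (k - d) + walkWeight B c d := by
  obtain ⟨a, b, hab, hb, hfab⟩ := exists_lt_le_card_eq f
  obtain ⟨d, hd, rfl⟩ : ∃ d, 0 < d ∧ b = a + d := ⟨b - a, by omega, by omega⟩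
  obtain ⟨m, rfl⟩ := Nat.exists_eq_add_of_le (hb.trans hk.le)
  have hf : f (a + d) = f a := hfab.symm
  refine ⟨d, hd, hb.trans' (Nat.le_add_left d a), ?_⟩
  rw [show a + d + m - d = a + m by omega]
  refine ⟨_, fun t => f (a + t), ?_, ?_, by simpa using hf, walkWeight_eq_add_of_eq B hf m⟩
  · rcases a.eq_zero_or_pos with rfl | ha
    · simpa using hf
    · exact if_pos ha
  · rw [if_neg (by omega)]
    congr 1
    omega

end Walks

theorem EReal.add_iSup {ι : Sort*} (c : EReal) (g : ι → EReal) :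
    c + ⨆ i, g i = ⨆ i, c + g i := by
  refine le_antisymm (EReal.add_le_of_forall_lt fun c' hc b' hb => ?_)
    (iSup_le fun i => add_le_add_right (le_iSup g i) c)
  obtain ⟨i, hi⟩ := lt_iSup_iff.1 hb
  exact (add_le_add hc.le hi.le).trans (le_iSup (fun i => c + g i) i)

section EReal

variable {ι : Type*} (B : ι → ι → EReal)

theorem walkWeight_ne_top (hB : ∀ i j, B i j ≠ ⊤) (f : ℕ → ι) (k : ℕ) :
    walkWeight B f k ≠ ⊤ :=
  sum_induction _ (· ≠ ⊤) (fun _ _ => EReal.add_ne_top) EReal.zero_ne_top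
    fun _ _ => hB _ _

theorem walkWeight_sub_coe (r : ℝ) (f : ℕ → ι) (k : ℕ) :
    walkWeight (fun i j => B i j - r) f k = walkWeight B f k - ((k * r : ℝ) : EReal) := by
  simp only [sub_eq_add_neg, ← EReal.coe_neg, walkWeight_add_const, ← EReal.coe_nsmul,
    nsmul_eq_mul, mul_neg]

def NonposCycles : Prop :=
  ∀ k f, 0 < k → f k = f 0 → walkWeight B f k ≤ 0

variable {B}

theorem nonposCycles_of_short [Fintype ι]
    (h : ∀ k f, 0 < k → k ≤ Fintype.card ι → f k = f 0 → walkWeight B f k ≤ 0) :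
    NonposCycles B := by
  intro k
  induction k using Nat.strong_induction_on with
  | _ k ih =>
  intro f hk hf
  by_cases hkn : k ≤ Fintype.card ι
  · exact h k f hk hkn hf
  obtain ⟨d, hd, hdn, g, c, hg0, hgk, hc, hsplit⟩ :=
    exists_walkWeight_eq_add_closed B f (not_le.1 hkn)
  rw [hsplit, ← add_zero 0]
  exact add_le_add (ih _ (by omega) g (by omega) (by rw [hgk, hg0, hf]))
    (ih d (by omega) c hd hc)

theorem NonposCycles.walkWeight_le [Fintype ι] (hB : NonposCycles B) {C : EReal}
    (hC0 : 0 ≤ C) (hC : ∀ i j, B i j ≤ C) (f : ℕ → ι) (k : ℕ) :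
    walkWeight B f k ≤ Fintype.card ι • C := by
  induction k using Nat.strong_induction_on generalizing f with
  | _ k ih =>
  by_cases hkn : k ≤ Fintype.card ι
  · calc walkWeight B f k ≤ (range k).card • C :=
          sum_le_card_nsmul _ _ _ fun _ _ => hC _ _
      _ ≤ Fintype.card ι • C := by
          rw [card_range]
          exact nsmul_le_nsmul_left hC0 hkn
  obtain ⟨d, hd, -, g, c, -, -, hc, hsplit⟩ :=
    exists_walkWeight_eq_add_closed B f (not_le.1 hkn)
  rw [hsplit, ← add_zero (Fintype.card ι • C)]
  exact add_le_add (ih _ (by omega) g) (hB d c hd hc)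

end EReal

section MaxWalkWeight

variable {ι : Type*} (B : ι → ι → EReal)

-- The entry `(i, j)` of the Kleene star `B* = I ⊕ B ⊕ B² ⊕ ⋯`.
noncomputable def maxWalkWeight (i j : ι) : EReal :=
  ⨆ (k : ℕ) (f : ℕ → ι) (_ : f 0 = i ∧ f k = j), walkWeight B f k

variable {B}

theorem walkWeight_le_maxWalkWeight {f : ℕ → ι} {k : ℕ} {i j : ι} (h0 : f 0 = i)
    (hk : f k = j) : walkWeight B f k ≤ maxWalkWeight B i j :=
  le_iSup_of_le k <| le_iSup_of_le f <| le_iSup_of_le ⟨h0, hk⟩ le_rfl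

theorem zero_le_maxWalkWeight_self (i : ι) : 0 ≤ maxWalkWeight B i i :=
  (walkWeight_zero B fun _ => i).symm.le.trans (walkWeight_le_maxWalkWeight rfl rfl)

theorem NonposCycles.maxWalkWeight_ne_top [Fintype ι] (hB : NonposCycles B)
    (htop : ∀ i j, B i j ≠ ⊤) (i j : ι) : maxWalkWeight B i j ≠ ⊤ := by
  obtain ⟨C, hC⟩ := (Set.finite_range fun p : ι × ι => (B p.1 p.2).toReal).bddAbove
  have hBC : ∀ i j, B i j ≤ ((max C 0 : ℝ) : EReal) := fun i j =>
    (EReal.le_coe_toReal (htop i j)).trans <| EReal.coe_le_coe_iff.2 <|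
      (hC ⟨(i, j), rfl⟩).trans (le_max_left C 0)
  refine ne_top_of_le_ne_top (b := Fintype.card ι • ((max C 0 : ℝ) : EReal)) ?_ ?_
  · rw [← EReal.coe_nsmul]
    exact EReal.coe_ne_top _
  · exact iSup_le fun k => iSup_le fun f => iSup_le fun _ =>
      hB.walkWeight_le (EReal.coe_nonneg.2 (le_max_right C 0)) hBC f k

theorem add_maxWalkWeight_le (i j v : ι) :
    B i j + maxWalkWeight B j v ≤ maxWalkWeight B i v := by
  simp only [maxWalkWeight, EReal.add_iSup]
  refine iSup_le fun k => iSup_le fun f => iSup_le fun hf => ?_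
  let f' : ℕ → ι := fun t => Nat.casesOn t i f
  calc B i j + walkWeight B f k = walkWeight B f' (k + 1) := by
        rw [walkWeight_succ', ← hf.1]
        rfl
    _ ≤ ⨆ (k : ℕ) (f : ℕ → ι) (_ : f 0 = i ∧ f k = v), walkWeight B f k :=
        walkWeight_le_maxWalkWeight rfl hf.2

theorem walkWeight_succ_le_iSup_add {f : ℕ → ι} {k : ℕ} {v : ι} (hk : f (k + 1) = v) :
    walkWeight B f (k + 1) ≤ ⨆ j, B (f 0) j + maxWalkWeight B j v := by
  rw [walkWeight_succ']
  exact le_iSup_of_le (f 1) <| add_le_add_right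
    (walkWeight_le_maxWalkWeight (B := B) (f := fun t => f (t + 1)) rfl hk) _

-- The empty walk at `c 0` is dominated by the closed walk `c`, which starts with an arc.
theorem maxWalkWeight_le_iSup_add {k : ℕ} {c : ℕ → ι} (hk : 0 < k) (hc : c k = c 0)
    (hcrit : 0 ≤ walkWeight B c k) (i : ι) :
    maxWalkWeight B i (c 0) ≤ ⨆ j, B i j + maxWalkWeight B j (c 0) := by
  refine iSup_le fun m => iSup_le fun f => iSup_le fun hf => ?_
  obtain ⟨k, rfl⟩ : ∃ k', k = k' + 1 := ⟨k - 1, by omega⟩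
  rcases m with _ | m
  · rw [walkWeight_zero, ← hf.1, hf.2]
    exact hcrit.trans (walkWeight_succ_le_iSup_add hc)
  · rw [← hf.1]
    exact walkWeight_succ_le_iSup_add hf.2

theorem NonposCycles.exists_eigenvector [Fintype ι] (hB : NonposCycles B)
    (htop : ∀ i j, B i j ≠ ⊤) {k : ℕ} {c : ℕ → ι} (hk : 0 < k) (hc : c k = c 0)
    (hcrit : 0 ≤ walkWeight B c k) :
    ∃ x : ι → EReal, (∀ j, x j ≠ ⊤) ∧ (∃ j, x j ≠ ⊥) ∧ ∀ i, ⨆ j, B i j + x j = x i :=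
  ⟨fun i => maxWalkWeight B i (c 0), fun j => hB.maxWalkWeight_ne_top htop j (c 0),
    ⟨c 0, ((zero_le_maxWalkWeight_self _).trans_lt' EReal.bot_lt_zero).ne'⟩,
    fun i => le_antisymm (iSup_le fun j => add_maxWalkWeight_le i j (c 0))
      (maxWalkWeight_le_iSup_add hk hc hcrit i)⟩

end MaxWalkWeight

section Rho

variable {n : ℕ}

theorem coe_inv_mul_le_coe_iff {k : ℕ} (hk : 0 < k) (w : EReal) (r : ℝ) :
    (((k : ℝ)⁻¹ : ℝ) : EReal) * w ≤ r ↔ w ≤ ((k * r : ℝ) : EReal) := by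
  have hk' : (0 : EReal) < (k : ℝ) := EReal.coe_pos.2 (Nat.cast_pos.2 hk)
  rw [EReal.coe_inv, ← EReal.div_eq_inv_mul,
    EReal.div_le_iff_le_mul hk' (EReal.coe_ne_top _), EReal.coe_mul]

theorem walkWeight_sub_coe_nonpos_iff (A : Fin n → Fin n → EReal) {k : ℕ} (hk : 0 < k)
    (f : ℕ → Fin n) (r : ℝ) :
    walkWeight (fun i j => A i j - r) f k ≤ 0 ↔
      (((k : ℝ)⁻¹ : ℝ) : EReal) * walkWeight A f k ≤ r := by
  rw [walkWeight_sub_coe, EReal.sub_nonpos, coe_inv_mul_le_coe_iff hk]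

theorem mean_le_rho (A : Fin n → Fin n → EReal) {k : ℕ} (hk : 0 < k) {f : ℕ → Fin n}
    (hf : f k = f 0) : (((k : ℝ)⁻¹ : ℝ) : EReal) * walkWeight A f k ≤ rho A :=
  le_iSup_of_le k <| le_iSup_of_le hk <| le_iSup_of_le f <| le_iSup_of_le hf le_rfl

theorem rho_le_coe_iff (A : Fin n → Fin n → EReal) (r : ℝ) :
    rho A ≤ r ↔ NonposCycles fun i j => A i j - r := by
  refine ⟨fun h k f hk hf => ?_, fun h => ?_⟩
  · exact (walkWeight_sub_coe_nonpos_iff A hk f r).2 ((mean_le_rho A hk hf).trans h)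
  · exact iSup_le fun k => iSup_le fun hk => iSup_le fun f => iSup_le fun hf =>
      (walkWeight_sub_coe_nonpos_iff A hk f r).1 (h k f hk hf)

theorem exists_max_mean_short_closed_walk (hn : 0 < n) (A : Fin n → Fin n → EReal) :
    ∃ (k : ℕ) (f : ℕ → Fin n), 0 < k ∧ f k = f 0 ∧
      ∀ k' f', 0 < k' → k' ≤ n → f' k' = f' 0 →
      (((k' : ℝ)⁻¹ : ℝ) : EReal) * walkWeight A f' k' ≤
        (((k : ℝ)⁻¹ : ℝ) : EReal) * walkWeight A f k := by
  let mean : ℕ × (ℕ → Fin n) → EReal := fun p =>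
    (((p.1 : ℝ)⁻¹ : ℝ) : EReal) * walkWeight A p.2 p.1
  let S : Set (ℕ × (ℕ → Fin n)) := {p | 0 < p.1 ∧ p.1 ≤ n ∧ p.2 p.1 = p.2 0}
  -- a short walk is determined by its first `n + 1` vertices
  have hfin : (mean '' S).Finite := by
    refine (Set.finite_range fun q : Fin (n + 1) × (Fin (n + 1) → Fin n) =>
      mean (q.1, fun t => q.2 ⟨min t n, by omega⟩)).subset ?_
    rintro _ ⟨⟨k, f⟩, ⟨-, hkn, -⟩, rfl⟩
    refine ⟨(⟨k, by omega⟩, fun t => f t), ?_⟩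
    simp only [mean]
    congr 1
    exact walkWeight_congr A fun t ht => by simp [min_eq_left (ht.trans hkn)]
  obtain ⟨_, ⟨⟨k, f⟩, ⟨hk, -, hf⟩, rfl⟩, hmax⟩ :=
    Set.exists_max_image (mean '' S) id hfin
      ⟨_, (1, fun _ => ⟨0, hn⟩), ⟨one_pos, hn, rfl⟩, rfl⟩
  exact ⟨k, f, hk, hf, fun k' f' hk' hkn' hf' => hmax _ ⟨(k', f'), ⟨hk', hkn', hf'⟩, rfl⟩⟩

theorem exists_rho_eq_mean (hn : 0 < n) (A : Fin n → Fin n → EReal) :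
    ∃ (k : ℕ) (f : ℕ → Fin n), 0 < k ∧ f k = f 0 ∧
      rho A = (((k : ℝ)⁻¹ : ℝ) : EReal) * walkWeight A f k := by
  obtain ⟨k, f, hk, hf, hmax⟩ := exists_max_mean_short_closed_walk hn A
  refine ⟨k, f, hk, hf, le_antisymm ?_ (mean_le_rho A hk hf)⟩
  refine EReal.le_of_forall_lt_iff_le.1 fun r hr => (rho_le_coe_iff A r).2 <|
    nonposCycles_of_short fun k' f' hk' hkn' hf' => ?_
  rw [walkWeight_sub_coe_nonpos_iff A hk']
  exact (hmax k' f' hk' (by simpa using hkn') hf').trans hr.le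

end Rho

section Eigen

variable {n : ℕ}

theorem walkWeight_eq_bot_of_rho_eq_bot {A : Fin n → Fin n → EReal} (h : rho A = ⊥) {k : ℕ}
    (hk : 0 < k) {f : ℕ → Fin n} (hf : f k = f 0) : walkWeight A f k = ⊥ := by
  refine le_bot_iff.1 (EReal.le_of_forall_lt_iff_le.1 fun z _ => ?_)
  have hz := (coe_inv_mul_le_coe_iff hk _ (z / k)).1 ((mean_le_rho A hk hf).trans (h ▸ bot_le))
  rwa [mul_div_cancel₀ z (by positivity)] at hz

-- If every vertex had an incoming arc, walking backwards would close a cycle of finite weight.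
theorem exists_forall_eq_bot_of_rho_eq_bot (hn : 0 < n) {A : Fin n → Fin n → EReal}
    (h : rho A = ⊥) : ∃ j, ∀ i, A i j = ⊥ := by
  by_contra! hpred
  choose pred hpred using hpred
  let F : ℕ → Fin n := fun m => pred^[m] ⟨0, hn⟩
  have hF : ∀ m, F (m + 1) = pred (F m) := fun m => Function.iterate_succ_apply' pred m _
  obtain ⟨a, b, hab, -, hFab⟩ := exists_lt_le_card_eq F
  let f : ℕ → Fin n := fun t => F (b - t)
  have hf : f (b - a) = f 0 := by simp only [f, Nat.sub_sub_self hab.le, Nat.sub_zero, hFab]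
  obtain ⟨t, ht, hbot⟩ :=
    WithBot.sum_eq_bot_iff.1 (walkWeight_eq_bot_of_rho_eq_bot h (Nat.sub_pos_of_lt hab) hf)
  rw [mem_range] at ht
  have hft : f t = pred (f (t + 1)) := by
    simp only [f, ← hF]
    congr 1
    omega
  exact hpred (f (t + 1)) (hft ▸ hbot)

theorem exists_eigenvector_of_rho_eq_bot (hn : 0 < n) {A : Fin n → Fin n → EReal}
    (h : rho A = ⊥) :
    ∃ x : Fin n → EReal, (∀ j, x j ≠ ⊤) ∧ (∃ j, x j ≠ ⊥) ∧
      ∀ i, ⨆ j, A i j + x j = rho A + x i := by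
  obtain ⟨j₀, hj₀⟩ := exists_forall_eq_bot_of_rho_eq_bot hn h
  refine ⟨fun j => if j = j₀ then 0 else ⊥, fun j => by by_cases hj : j = j₀ <;> simp [hj],
    ⟨j₀, by simp⟩, fun i => ?_⟩
  rw [h, EReal.bot_add, iSup_eq_bot]
  intro j
  by_cases hj : j = j₀
  · simp [hj, hj₀]
  · simp [hj]

theorem exists_eigenvector_of_rho_eq_coe {A : Fin n → Fin n → EReal} (hA : ∀ i j, A i j ≠ ⊤)
    {r : ℝ} (hr : rho A = r) {k : ℕ} {f : ℕ → Fin n} (hk : 0 < k) (hf : f k = f 0)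
    (hcrit : 0 ≤ walkWeight (fun i j => A i j - r) f k) :
    ∃ x : Fin n → EReal, (∀ j, x j ≠ ⊤) ∧ (∃ j, x j ≠ ⊥) ∧
      ∀ i, ⨆ j, A i j + x j = rho A + x i := by
  have hsub : ∀ i j, A i j - r ≠ ⊤ := fun i j => by
    rw [sub_eq_add_neg, ← EReal.coe_neg]
    exact EReal.add_ne_top (hA i j) (EReal.coe_ne_top _)
  obtain ⟨x, hxt, hxb, hx⟩ := ((rho_le_coe_iff A r).1 hr.le).exists_eigenvector hsub hk hf hcrit
  refine ⟨x, hxt, hxb, fun i => ?_⟩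
  rw [hr, ← hx i, EReal.add_iSup]
  refine iSup_congr fun j => ?_
  rw [← add_assoc, add_comm (r : EReal), EReal.sub_add_cancel]

theorem exists_ne_bot_add_eq_of_iSup_add_eq {ι : Type*} [Finite ι] {a : ι → EReal}
    {x : ι → EReal} {l : ℝ} {i : ι} (h : ⨆ j, a j + x j = l + x i) (hi : x i ≠ ⊥) :
    ∃ j, x j ≠ ⊥ ∧ a j + x j = l + x i := by
  have : Nonempty ι := ⟨i⟩
  obtain ⟨j, hj⟩ := exists_eq_ciSup_of_finite (f := fun j => a j + x j)
  rw [h] at hj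
  refine ⟨j, fun hjb => ?_, hj⟩
  rw [hjb, EReal.add_bot] at hj
  exact EReal.add_ne_bot_iff.2 ⟨EReal.coe_ne_bot l, hi⟩ hj.symm

theorem le_rho_of_eigenvector {A : Fin n → Fin n → EReal} {lam : EReal} {x : Fin n → EReal}
    (hlam : lam ≠ ⊤) (hx : ∀ j, x j ≠ ⊤) (hxb : ∃ j, x j ≠ ⊥)
    (heig : ∀ i, ⨆ j, A i j + x j = lam + x i) : lam ≤ rho A := by
  obtain rfl | hlb := eq_or_ne lam ⊥
  · exact bot_le
  lift lam to ℝ using ⟨hlam, hlb⟩ with l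
  obtain ⟨j₀, hj₀⟩ := hxb
  have hnext : ∀ i : {i // x i ≠ ⊥}, ∃ j : {j // x j ≠ ⊥}, A i j + x j = l + x i := fun i =>
    have ⟨j, hj, hij⟩ := exists_ne_bot_add_eq_of_iSup_add_eq (heig i) i.2
    ⟨⟨j, hj⟩, hij⟩
  choose next hnext using hnext
  -- an infinite walk along arcs attaining the maxima, which closes up by pigeonhole
  let F : ℕ → Fin n := fun m => (next^[m] ⟨j₀, hj₀⟩).1
  have hF : ∀ m, A (F m) (F (m + 1)) + x (F (m + 1)) = l + x (F m) := fun m => by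
    simp only [F, Function.iterate_succ_apply']
    exact hnext _
  obtain ⟨a, b, hab, -, hFab⟩ := exists_lt_le_card_eq F
  have hba : a + (b - a) = b := Nat.add_sub_cancel' hab.le
  have htel :=
    walkWeight_add_eq_nsmul_add A (f := fun t => F (a + t)) (fun t => hF (a + t)) (b - a)
  simp only [hba, add_zero, ← hFab] at htel
  obtain ⟨u, hu⟩ : ∃ u : ℝ, x (F a) = u := ⟨_, (EReal.coe_toReal (hx _) (next^[a] _).2).symm⟩
  rw [hu, ← EReal.coe_nsmul] at htel
  have hw : walkWeight A (fun t => F (a + t)) (b - a) = (((b - a) • l : ℝ) : EReal) := by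
    simpa only [EReal.add_sub_cancel_right] using congrArg (· - (u : EReal)) htel
  have hmean := mean_le_rho A (Nat.sub_pos_of_lt hab) (f := fun t => F (a + t))
    (by simp only [hba, add_zero, hFab])
  rwa [hw, ← EReal.coe_mul, nsmul_eq_mul,
    inv_mul_cancel_left₀ (Nat.cast_ne_zero.2 (Nat.sub_pos_of_lt hab).ne')] at hmean

end Eigen

theorem stmt5 (n : ℕ) (hn : 0 < n) (A : Fin n → Fin n → EReal)
    (hA : ∀ i j, A i j ≠ ⊤) :
    (∃ x : Fin n → EReal, (∀ j, x j ≠ ⊤) ∧ (∃ j, x j ≠ ⊥) ∧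
        ∀ i, (⨆ j, A i j + x j) = rho A + x i) ∧
    (∀ (lam : EReal) (x : Fin n → EReal), lam ≠ ⊤ → (∀ j, x j ≠ ⊤) →
        (∃ j, x j ≠ ⊥) → (∀ i, (⨆ j, A i j + x j) = lam + x i) → lam ≤ rho A) := by
  refine ⟨?_, fun lam x hlam hx hxb heig => le_rho_of_eigenvector hlam hx hxb heig⟩
  obtain ⟨k, f, hk, hf, hrho⟩ := exists_rho_eq_mean hn A
  generalize hw : walkWeight A f k = w at hrho
  induction w with
  | bot =>
    exact exists_eigenvector_of_rho_eq_bot hn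
      (by rw [hrho, EReal.coe_mul_bot_of_pos (by positivity)])
  | top => exact absurd hw (walkWeight_ne_top A hA f k)
  | coe w =>
    rw [← EReal.coe_mul] at hrho
    refine exists_eigenvector_of_rho_eq_coe hA hrho hk hf (le_of_eq ?_)
    rw [walkWeight_sub_coe, hw, ← EReal.coe_sub, mul_inv_cancel_left₀ (by positivity), sub_self,
      EReal.coe_zero]
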